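/- If h ∈ L_g[k] induces the identity on H' = F'/F'₂, then J^L_k(h) lies in D_k(H') = ker(H' ⊗ L_{k+1}(H') → L_{k+2}(H')). -/

import Mathlib

/-! **Statement 15.** If `h ∈ L_g[k]` induces the identity on `H' = F'/F'₂`, then
`J^L_k(h)` lies in `D_k(H') = ker(H' ⊗ L_{k+1}(H') → L_{k+2}(H'))`.

With `J^L_k(h) = ∑ᵢ yᵢ ⊗ [p(h(xᵢ))]`, its image under the bracketing map is the class
of `∏ᵢ [yᵢ, p(h(xᵢ))]` in `F'_{k+2}/F'_{k+3}`; so the statement is that this product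
lies in `F'_{k+3} = lowerCentralSeries F' (k+2)`.  `F` is free on
`x₁,…,x_g,y₁,…,y_g`, `F'` free on the `yᵢ`, and `p : F → F'` kills the `xᵢ`. -/

abbrev FG (g : ℕ) := FreeGroup (Fin g ⊕ Fin g)
abbrev FP (g : ℕ) := FreeGroup (Fin g)

def xg {g : ℕ} (i : Fin g) : FG g := FreeGroup.of (Sum.inl i)
def yg {g : ℕ} (i : Fin g) : FG g := FreeGroup.of (Sum.inr i)

def pr (g : ℕ) : FG g →* FP g :=
  FreeGroup.lift (Sum.elim (fun _ => (1 : FP g)) (fun i => FreeGroup.of i))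

def omegaW (g : ℕ) : FG g :=
  (((List.finRange g).map fun i => yg i).prod)⁻¹ *
    ((List.finRange g).map fun i => xg i * yg i * (xg i)⁻¹).prod

open scoped commutatorElement

section aux
variable {G : Type*} [Group G]

lemma three_subgroups (A B C N : Subgroup G) [N.Normal]
    (h1 : ⁅⁅B, C⁆, A⁆ ≤ N) (h2 : ⁅⁅C, A⁆, B⁆ ≤ N) : ⁅⁅A, B⁆, C⁆ ≤ N := by
  set π := QuotientGroup.mk' N with hπ
  have key : ∀ X Y Z : Subgroup G, ⁅⁅X, Y⁆, Z⁆ ≤ N ↔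
      ⁅⁅X.map π, Y.map π⁆, Z.map π⁆ = ⊥ := by
    intro X Y Z
    rw [← Subgroup.map_commutator, ← Subgroup.map_commutator, Subgroup.map_eq_bot_iff,
      QuotientGroup.ker_mk']
  rw [key]
  exact Subgroup.commutator_commutator_eq_bot_of_rotate ((key _ _ _).mp h1) ((key _ _ _).mp h2)

lemma lcs_comm : ∀ (n m : ℕ),
    ⁅(⊤ : Subgroup G).lowerCentralSeries m, (⊤ : Subgroup G).lowerCentralSeries n⁆ ≤ (⊤ : Subgroup G).lowerCentralSeries (m + n + 1)
  | 0, m => by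
      have h0 : (⊤ : Subgroup G).lowerCentralSeries (m + 0 + 1) = ⁅(⊤ : Subgroup G).lowerCentralSeries m, ⊤⁆ := rfl
      rw [h0]
      exact Subgroup.commutator_mono le_rfl le_top
  | n + 1, m => by
      have hdef : (⊤ : Subgroup G).lowerCentralSeries (n + 1) = ⁅(⊤ : Subgroup G).lowerCentralSeries n, ⊤⁆ := rfl
      rw [hdef, Subgroup.commutator_comm]
      apply three_subgroups
      · rw [Subgroup.commutator_comm (⊤ : Subgroup G)]
        have h1 : (⁅(⊤ : Subgroup G).lowerCentralSeries m, (⊤ : Subgroup G)⁆ : Subgroup G) =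
            (⊤ : Subgroup G).lowerCentralSeries (m + 1) := rfl
        rw [h1]
        have := lcs_comm n (m + 1)
        rwa [show m + 1 + n + 1 = m + (n + 1) + 1 by omega] at this
      · calc ⁅⁅(⊤ : Subgroup G).lowerCentralSeries m, (⊤ : Subgroup G).lowerCentralSeries n⁆, (⊤ : Subgroup G)⁆
            ≤ ⁅(⊤ : Subgroup G).lowerCentralSeries (m + n + 1), (⊤ : Subgroup G)⁆ :=
              Subgroup.commutator_mono (lcs_comm n m) le_rfl
          _ = (⊤ : Subgroup G).lowerCentralSeries (m + n + 2) := rfl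
          _ ≤ (⊤ : Subgroup G).lowerCentralSeries (m + (n + 1) + 1) := by
              rw [show m + (n + 1) + 1 = m + n + 2 by omega]

lemma prod_central (l : List G) (hl : ∀ x ∈ l, ∀ q, x * q = q * x) (q : G) :
    l.prod * q = q * l.prod := by
  induction l with
  | nil => simp
  | cons x t ih =>
    have hx := hl x (List.mem_cons_self ..)
    have ih' := ih (fun y hy => hl y (List.mem_cons_of_mem _ hy))
    simp only [List.prod_cons]
    rw [mul_assoc, ih', ← mul_assoc, hx, mul_assoc]

lemma prod_mul_split {α : Type*} (l : List α) (d f : α → G)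
    (hd : ∀ i ∈ l, ∀ q, d i * q = q * d i) :
    (l.map fun i => d i * f i).prod = (l.map d).prod * (l.map f).prod := by
  induction l with
  | nil => simp
  | cons x t ih =>
    have ih' := ih (fun y hy => hd y (List.mem_cons_of_mem _ hy))
    simp only [List.map_cons, List.prod_cons, ih']
    have hcomm : (t.map d).prod * f x = f x * (t.map d).prod := by
      apply prod_central
      intro z hz q
      obtain ⟨i, hi, rfl⟩ := List.mem_map.mp hz
      exact hd i (List.mem_cons_of_mem _ hi) q
    rw [show d x * f x * ((t.map d).prod * (t.map f).prod)
        = d x * (f x * (t.map d).prod) * (t.map f).prod by group, ← hcomm]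
    group

lemma prod_inv_central {α : Type*} (l : List α) (d : α → G)
    (hd : ∀ i ∈ l, ∀ q, d i * q = q * d i) :
    (l.map fun i => (d i)⁻¹).prod = ((l.map d).prod)⁻¹ := by
  induction l with
  | nil => simp
  | cons x t ih =>
    have ih' := ih (fun y hy => hd y (List.mem_cons_of_mem _ hy))
    simp only [List.map_cons, List.prod_cons, ih', mul_inv_rev]
    have hx : Commute (d x) ((t.map d).prod)⁻¹ := hd x (List.mem_cons_self ..) ((t.map d).prod)⁻¹
    exact hx.inv_left.eq

lemma comm_mul_right (B A E : G) (hE : B * E = E * B) : ⁅B, A * E⁆ = ⁅B, A⁆ := by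
  have hc : Commute B E := hE
  simp only [commutatorElement_def, mul_inv_rev]
  calc B * (A * E) * B⁻¹ * (E⁻¹ * A⁻¹)
      = B * A * (E * B⁻¹) * E⁻¹ * A⁻¹ := by group
    _ = B * A * (B⁻¹ * E) * E⁻¹ * A⁻¹ := by rw [← hc.inv_left.eq]
    _ = B * A * B⁻¹ * A⁻¹ := by group

lemma commute_of_comm_mem {H : Type*} [Group H] (f : G →* H) (x y : G)
    (hxy : f ⁅x, y⁆ = 1) : f x * f y = f y * f x := by
  have : Commute (f x) (f y) := commutatorElement_eq_one_iff_commute.mp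
    (by rw [← map_commutatorElement]; exact hxy)
  exact this.eq

end aux

theorem stmt15 (g k : ℕ) (hk : 1 ≤ k) (h : MulAut (FG g))
    (hω : h (omegaW g) = omegaW g)
    (hmem : ∀ i, pr g (h (xg i)) ∈ (⊤ : Subgroup (FP g)).lowerCentralSeries k)
    -- `h` induces the identity on `H' = F'/F'₂`:
    (htriv : ∀ w : FG g, (pr g w)⁻¹ * pr g (h w) ∈ (⊤ : Subgroup (FP g)).lowerCentralSeries 1) :
    ((List.finRange g).map fun i => ⁅(FreeGroup.of i : FP g), pr g (h (xg i))⁆).prod ∈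
      (⊤ : Subgroup (FP g)).lowerCentralSeries (k + 2) := by
  set N := (⊤ : Subgroup (FP g)).lowerCentralSeries (k + 2) with hN
  set π := QuotientGroup.mk' N with hπdef
  set a : Fin g → FP g := fun i => FreeGroup.of i with ha
  set b : Fin g → FP g := fun i => pr g (h (xg i)) with hb
  set c : Fin g → FP g := fun i => pr g (h (yg i)) with hc
  have hπ1 : ∀ z : FP g, z ∈ N → π z = 1 := fun z hz => (QuotientGroup.eq_one_iff z).mpr hz
  -- elements of Γ(k+1) map to central elements of the quotient
  have hcent : ∀ z : FP g, z ∈ (⊤ : Subgroup (FP g)).lowerCentralSeries (k + 1) →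
      ∀ q : FP g ⧸ N, π z * q = q * π z := by
    intro z hz q
    obtain ⟨w, rfl⟩ := QuotientGroup.mk'_surjective N q
    apply commute_of_comm_mem
    apply hπ1
    exact Subgroup.commutator_mem_commutator hz (Subgroup.mem_top w)
  -- basic computations of pr
  have hx1 : ∀ i, pr g (xg i) = 1 := fun i => by simp [pr, xg]
  have hy1 : ∀ i, pr g (yg i) = a i := fun i => by simp [pr, yg, ha]
  -- expansion of a hom applied to omegaW
  have expand : ∀ (f : FG g →* FP g), f (omegaW g) =
      (((List.finRange g).map fun i => f (yg i)).prod)⁻¹ *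
        ((List.finRange g).map fun i => f (xg i) * f (yg i) * (f (xg i))⁻¹).prod := by
    intro f
    simp [omegaW, map_list_prod, List.map_map, Function.comp_def]
  -- key product identity in FP g
  have keyFP : ((List.finRange g).map fun i => ⁅b i, c i⁆ * c i).prod =
      ((List.finRange g).map fun i => c i).prod := by
    have H1 : pr g (h (omegaW g)) = pr g (omegaW g) := congrArg _ hω
    have e1 := expand ((pr g).comp h.toMonoidHom)
    have e2 := expand (pr g)
    simp only [MonoidHom.comp_apply, MulEquiv.toMonoidHom_eq_coe, MonoidHom.coe_coe] at e1
    rw [e1, e2] at H1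
    simp only [hx1, hy1, one_mul, inv_one, mul_one, inv_mul_cancel] at H1
    rw [inv_mul_eq_one] at H1
    rw [show (fun i => ⁅b i, c i⁆ * c i) = fun i => b i * c i * (b i)⁻¹ from
      funext fun i => by group]
    exact H1.symm
  -- ε i ∈ Γ₁
  have heps : ∀ i, (a i)⁻¹ * c i ∈ (⊤ : Subgroup (FP g)).lowerCentralSeries 1 := by
    intro i
    have := htriv (yg i)
    rwa [hy1 i] at this
  -- the commutators ⁅b i, c i⁆ lie in Γ(k+1), hence are central mod N
  have hD_mem : ∀ i, ⁅b i, c i⁆ ∈ (⊤ : Subgroup (FP g)).lowerCentralSeries (k + 1) := fun i =>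
    Subgroup.commutator_mem_commutator (hmem i) (Subgroup.mem_top _)
  have hD_cent : ∀ i, ∀ q : FP g ⧸ N, π ⁅b i, c i⁆ * q = q * π ⁅b i, c i⁆ :=
    fun i => hcent _ (hD_mem i)
  -- push keyFP to the quotient
  have hQ : ((List.finRange g).map fun i => π ⁅b i, c i⁆ * π (c i)).prod =
      ((List.finRange g).map fun i => π (c i)).prod := by
    have h2 := congrArg π keyFP
    rw [map_list_prod, map_list_prod, List.map_map, List.map_map] at h2
    simpa only [Function.comp_def, map_mul] using h2
  -- conclude ∏ π⁅b i, c i⁆ = 1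
  have hsplit := prod_mul_split (List.finRange g) (fun i => π ⁅b i, c i⁆)
    (fun i => π (c i)) (fun i _ => hD_cent i)
  rw [hsplit] at hQ
  have hDprod : ((List.finRange g).map fun i => π ⁅b i, c i⁆).prod = 1 := by
    have := mul_right_cancel (b := ((List.finRange g).map fun i => π (c i)).prod)
      (a := ((List.finRange g).map fun i => π ⁅b i, c i⁆).prod) (c := 1)
    apply this
    rw [one_mul, hQ]
  -- identify π⁅b i, c i⁆ with π⁅b i, a i⁆
  have hbc_a : ∀ i, π ⁅b i, c i⁆ = π ⁅b i, a i⁆ := by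
    intro i
    have hdec : c i = a i * ((a i)⁻¹ * c i) := by group
    have hεN : ⁅b i, (a i)⁻¹ * c i⁆ ∈ N := by
      have hle := lcs_comm (G := FP g) 1 k
      exact hle (Subgroup.commutator_mem_commutator (hmem i) (heps i))
    have hcm : π (b i) * π ((a i)⁻¹ * c i) = π ((a i)⁻¹ * c i) * π (b i) :=
      commute_of_comm_mem π _ _ (hπ1 _ hεN)
    have hci : π (c i) = π (a i) * π ((a i)⁻¹ * c i) := by rw [← map_mul, ← hdec]
    calc π ⁅b i, c i⁆ = ⁅π (b i), π (a i) * π ((a i)⁻¹ * c i)⁆ := by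
          rw [map_commutatorElement, hci]
      _ = ⁅π (b i), π (a i)⁆ := comm_mul_right _ _ _ hcm
      _ = π ⁅b i, a i⁆ := (map_commutatorElement ..).symm
  -- finish
  refine (QuotientGroup.eq_one_iff _).mp ?_
  have hfin : π ((List.finRange g).map fun i => ⁅a i, b i⁆).prod = 1 := by
    rw [map_list_prod, List.map_map]
    have hrw : (π ∘ fun i => ⁅a i, b i⁆) = fun i => (π ⁅b i, c i⁆)⁻¹ := by
      funext i
      show π ⁅a i, b i⁆ = (π ⁅b i, c i⁆)⁻¹
      rw [hbc_a i, ← commutatorElement_inv (b i) (a i), map_inv]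
    rw [hrw, prod_inv_central (List.finRange g) (fun i => π ⁅b i, c i⁆)
      (fun i _ => hD_cent i), hDprod, inv_one]
  exact hfin
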